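/- Assume K has characteristic 0. For every n ≥ 2, the K-vector space of K-linear combinations f of the commutative nonassociative monomials of multidegree (n,1,1) in K(x,y,z) satisfying ε(f) = 0 and ∂_x(f) = ∂_y(f) = ∂_z(f) = 0 has dimension at least W_{n,1,1} − 3n, where W_{n,1,1} is the number of commutative nonassociative monomials of multidegree (n,1,1) in (x,y,z). -/

import Mathlib

namespace Evanescent

universe u v

variable {T : Type u}

/-- The commutativity relation on the free magma on `T`. -/
inductive CommRel (T : Type u) : FreeMagma T → FreeMagma T → Prop
  | comm (a b : FreeMagma T) : CommRel T (a * b) (b * a)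
  | mul_left {a b : FreeMagma T} (c : FreeMagma T) :
      CommRel T a b → CommRel T (a * c) (b * c)
  | mul_right (c : FreeMagma T) {a b : FreeMagma T} :
      CommRel T a b → CommRel T (c * a) (c * b)

/-- The free commutative magma on `T`: the set of commutative nonassociative
monomials (words) in the variables `T`. -/
def FreeCommMagma (T : Type u) : Type u := Quot (CommRel T)

namespace FreeCommMagma

instance : Mul (FreeCommMagma T) :=
  ⟨Quot.map₂ (· * ·) (fun a _ _ h => CommRel.mul_right a h)
    (fun _ _ b h => CommRel.mul_left b h)⟩

/-- The class of a nonassociative word in the free commutative magma. -/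
def mk (w : FreeMagma T) : FreeCommMagma T := Quot.mk (CommRel T) w

/-- The generator of the free commutative magma corresponding to a variable. -/
def of (t : T) : FreeCommMagma T := mk (FreeMagma.of t)

@[simp] lemma mk_mul (a b : FreeMagma T) : mk a * mk b = mk (a * b) := rfl

protected lemma mul_comm (a b : FreeCommMagma T) : a * b = b * a := by
  induction a using Quot.ind
  induction b using Quot.ind
  exact Quot.sound (CommRel.comm _ _)

instance : CommMagma (FreeCommMagma T) := ⟨FreeCommMagma.mul_comm⟩

end FreeCommMagma

section Peirce

variable (R : Type v) [Semiring R] [DecidableEq T]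

/-- The Peirce polynomial of a (noncommutative) nonassociative word, with
coefficients in `R`. -/
noncomputable def peirceAux (i : T) : FreeMagma T → Polynomial R
  | .of j => if j = i then 1 else 0
  | .mul u v => Polynomial.X * (peirceAux i u + peirceAux i v)

@[simp] lemma peirceAux_mul (i : T) (u v : FreeMagma T) :
    peirceAux R i (u * v) = Polynomial.X * (peirceAux R i u + peirceAux R i v) := rfl

@[simp] lemma peirceAux_of (i j : T) :
    peirceAux R i (FreeMagma.of j) = if j = i then 1 else 0 := rfl

/-- The number of occurrences of the variable `i` in a nonassociative word. -/
def countAux (i : T) : FreeMagma T → ℕ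
  | .of j => if j = i then 1 else 0
  | .mul u v => countAux i u + countAux i v

@[simp] lemma countAux_mul (i : T) (u v : FreeMagma T) :
    countAux i (u * v) = countAux i u + countAux i v := rfl

lemma peirceAux_respects (i : T) {a b : FreeMagma T} (h : CommRel T a b) :
    peirceAux R i a = peirceAux R i b := by
  induction h with
  | comm a b => simp [add_comm]
  | mul_left c h ih => simp [ih]
  | mul_right c h ih => simp [ih]

lemma countAux_respects (i : T) {a b : FreeMagma T} (h : CommRel T a b) :
    countAux i a = countAux i b := by
  induction h with
  | comm a b => simp [Nat.add_comm]
  | mul_left c h ih => simp [ih]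
  | mul_right c h ih => simp [ih]

/-- The Peirce polynomial `∂ᵢ(w)` of a commutative nonassociative monomial `w`,
determined by `∂ᵢ(tᵢ) = 1`, `∂ᵢ(tⱼ) = 0` for `j ≠ i`, and
`∂ᵢ(u·v) = X·(∂ᵢ(u) + ∂ᵢ(v))`. -/
noncomputable def FreeCommMagma.peirce (i : T) : FreeCommMagma T → Polynomial R :=
  Quot.lift (peirceAux R i) fun _ _ h => peirceAux_respects R i h

/-- The number of occurrences (degree) of the variable `i` in a commutative
nonassociative monomial. -/
def FreeCommMagma.count (i : T) : FreeCommMagma T → ℕ :=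
  Quot.lift (countAux i) fun _ _ h => countAux_respects i h

end Peirce

/-- Principal powers of an element of a magma: `ppow a n = a^(n+1)`,
i.e. `ppow a 0 = a` and `ppow a (n+1) = a * (ppow a n)`. -/
def ppow {M : Type v} [Mul M] (a : M) : ℕ → M
  | 0 => a
  | n + 1 => a * ppow a n

/-- Iterated left multiplication: `lpow a r g = a^{{r}} g`, i.e. `lpow a 0 g = g` and
`lpow a (r+1) g = a * (lpow a r g)`. -/
def lpow {M : Type v} [Mul M] (a : M) : ℕ → M → M
  | 0, g => g
  | r + 1, g => a * lpow a r g

section Algebra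

variable (K : Type v) [Field K]

/-- A commutative nonassociative monomial, viewed as an element of the free
commutative nonassociative algebra `K(T)` (realized as the magma algebra of the
free commutative magma). -/
noncomputable def mono (w : FreeCommMagma T) : MonoidAlgebra K (FreeCommMagma T) :=
  MonoidAlgebra.single w 1

/-- The augmentation (sum of the coefficients) of an element of the free
commutative nonassociative algebra. -/
noncomputable def aug : MonoidAlgebra K (FreeCommMagma T) →ₗ[K] K :=
  (Finsupp.lsum K fun _ => LinearMap.id).comp
    (MonoidAlgebra.coeffLinearEquiv K).toLinearMap

/-- The Peirce polynomial `∂ᵢ : K(T) → K[X]`, the `K`-linear map determined on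
monomials by `∂ᵢ(tᵢ) = 1`, `∂ᵢ(tⱼ) = 0` for `j ≠ i`, and `∂ᵢ(u·v) = X·(∂ᵢ(u) + ∂ᵢ(v))`. -/
noncomputable def Dp [DecidableEq T] (i : T) :
    MonoidAlgebra K (FreeCommMagma T) →ₗ[K] Polynomial K :=
  (Finsupp.lsum K fun w => LinearMap.toSpanSingleton K (Polynomial K)
    (FreeCommMagma.peirce K i w)) ∘ₗ (MonoidAlgebra.coeffLinearEquiv K).toLinearMap

/-- The free commutative nonassociative algebra is commutative. -/
lemma fca_mul_comm (f g : MonoidAlgebra K (FreeCommMagma T)) : f * g = g * f := by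
  rw [MonoidAlgebra.mul_def, MonoidAlgebra.mul_def, Finsupp.sum_comm]
  refine Finsupp.sum_congr fun a _ => Finsupp.sum_congr fun c _ => ?_
  rw [FreeCommMagma.mul_comm, mul_comm (f.coeff c) (g.coeff a)]

end Algebra

section Subst

variable (K : Type v) [Field K] {A : Type*} [Mul A]

/-- Evaluation of a nonassociative word under a substitution of the variables. -/
def evalAux (ρ : T → A) : FreeMagma T → A
  | .of t => ρ t
  | .mul u v => evalAux ρ u * evalAux ρ v

@[simp] lemma evalAux_mul (ρ : T → A) (u v : FreeMagma T) :
    evalAux ρ (u * v) = evalAux ρ u * evalAux ρ v := rfl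

/-- Evaluation of a commutative nonassociative monomial in a commutative magma
under a substitution of the variables. -/
def FreeCommMagma.eval (hA : ∀ a b : A, a * b = b * a) (ρ : T → A) :
    FreeCommMagma T → A :=
  Quot.lift (evalAux ρ) (by
    intro a b h
    induction h with
    | comm a b => exact hA _ _
    | mul_left c h ih => simp [ih]
    | mul_right c h ih => simp [ih])

/-- The substitution homomorphism `ρ̂ : K(T) → A` extending a substitution
`ρ : T → A` of the variables, for `A` a commutative nonassociative `K`-algebra. -/
noncomputable def subst [AddCommMonoid A] [Module K A]
    (hA : ∀ a b : A, a * b = b * a) (ρ : T → A)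
    (f : MonoidAlgebra K (FreeCommMagma T)) : A :=
  f.coeff.sum fun w c => c • FreeCommMagma.eval hA ρ w

end Subst

/-- The list of the leaves of a nonassociative word (a rooted binary tree with
leaves labeled by the variables), together with their heights. -/
def leaves : FreeMagma T → List (T × ℕ)
  | .of t => [(t, 0)]
  | .mul u v => (leaves u ++ leaves v).map fun p => (p.1, p.2 + 1)

end Evanescent
namespace Evanescent

/-- The subspace of homogeneous Peirce-evanescent identities of type `[n,1,1]` in
`K(x,y,z)` (variables `0`, `1`, `2` of `Fin 3`). -/
noncomputable def homEvan311 (K : Type*) [Field K] (n : ℕ) :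
    Submodule K (MonoidAlgebra K (FreeCommMagma (Fin 3))) :=
  (Submodule.span K (mono K '' {w : FreeCommMagma (Fin 3) |
      FreeCommMagma.count 0 w = n ∧ FreeCommMagma.count 1 w = 1 ∧
      FreeCommMagma.count 2 w = 1}))
    ⊓ LinearMap.ker (aug K) ⊓ LinearMap.ker (Dp K 0)
    ⊓ LinearMap.ker (Dp K 1) ⊓ LinearMap.ker (Dp K 2)

/-- The number `W_{n,1,1}` of commutative nonassociative monomials of multidegree
`(n,1,1)`. -/
noncomputable def Wn11 (n : ℕ) : ℕ :=
  Nat.card {w : FreeCommMagma (Fin 3) //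
    FreeCommMagma.count 0 w = n ∧ FreeCommMagma.count 1 w = 1 ∧
    FreeCommMagma.count 2 w = 1}

end Evanescent

/-!
Every monomial of multidegree `(n,1,1)` is a binary tree with `n + 2` leaves, so its Peirce
polynomials have no constant term and degree at most `n + 1`. Inside the `W_{n,1,1}`-dimensional
span of these monomials, impose the `3n` linear conditions that the coefficients of `∂ₓ f` in
degrees `1, …, n` and those of `∂_y f`, `∂_z f` in degrees `2, …, n + 1` vanish. Then
`∂ₓ f = a Xⁿ⁺¹`, `∂_y f = b X`, `∂_z f = c X`, and evaluation at `1`, which counts occurrences of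
a variable, gives `a = n ε(f)`, `b = c = ε(f)`. Evaluation at `1/2` and Kraft's equality
`∑ₜ ∂ₜ(w)(1/2) = 1` give `n ε(f) / 2ⁿ⁺¹ + ε(f) = ε(f)`, so `ε(f) = 0` in characteristic zero and
all three Peirce polynomials vanish.
-/

theorem finrank_le_finrank_add_finrank_of_inf_ker_le {K M N : Type*} [Field K]
    [AddCommGroup M] [Module K M] [AddCommGroup N] [Module K N] [FiniteDimensional K N]
    {V E : Submodule K M} (L : M →ₗ[K] N) (hEV : E ≤ V) (hker : V ⊓ LinearMap.ker L ≤ E) :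
    Module.finrank K V ≤ Module.finrank K E + Module.finrank K N := by
  by_cases hV : FiniteDimensional K V
  · have : FiniteDimensional K E := Submodule.finiteDimensional_of_le hEV
    have hrank := (L.domRestrict V).finrank_range_add_finrank_ker
    have hrange := Submodule.finrank_le (LinearMap.range (L.domRestrict V))
    have hmap : (LinearMap.ker (L.domRestrict V)).map V.subtype ≤ E := by
      rintro _ ⟨g, hg, rfl⟩
      exact hker ⟨g.2, hg⟩
    have := (Submodule.equivMapOfInjective V.subtype V.injective_subtype
      (LinearMap.ker (L.domRestrict V))).finrank_eq ▸ Submodule.finrank_mono hmap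
    omega
  · simp [Module.finrank_of_not_finite hV]

namespace Polynomial

theorem eq_C_mul_X_pow_of_coeff_eq_zero {R : Type*} [Semiring R] {p : R[X]} {d : ℕ}
    (h : ∀ k ≠ d, p.coeff k = 0) : p = C (p.coeff d) * X ^ d := by
  ext k
  rw [coeff_C_mul_X_pow]
  split_ifs with hk
  · rw [hk]
  · exact h k hk

noncomputable def coeffWindow (R : Type*) [Semiring R] (m n : ℕ) : R[X] →ₗ[R] (Fin n → R) :=
  LinearMap.pi fun k => lcoeff R (m + k)

theorem coeff_eq_zero_of_coeffWindow_eq_zero {R : Type*} [Semiring R] {m n : ℕ} {p : R[X]}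
    (hp : coeffWindow R m n p = 0) {k : ℕ} (hmk : m ≤ k) (hkn : k < m + n) : p.coeff k = 0 := by
  obtain ⟨j, rfl⟩ := Nat.exists_eq_add_of_le hmk
  exact congrFun hp ⟨j, by omega⟩

end Polynomial

namespace Evanescent

open Polynomial

section Words

variable {T : Type*} [DecidableEq T]

theorem length_eq_sum_countAux [Fintype T] (a : FreeMagma T) :
    a.length = ∑ i, countAux i a := by
  induction a with
  | ih1 t => simp [countAux]
  | ih2 u v ihu ihv => simp [FreeMagma.length, ihu, ihv, Finset.sum_add_distrib]

variable (R : Type*) [CommSemiring R]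

theorem coeff_zero_peirceAux_of_one_lt_length (i : T) {a : FreeMagma T} (ha : 1 < a.length) :
    (peirceAux R i a).coeff 0 = 0 := by
  cases a with
  | of t => simp [FreeMagma.length] at ha
  | mul u v => rw [FreeMagma.mul_eq, peirceAux_mul, mul_coeff_zero, coeff_X_zero, zero_mul]

theorem coeff_peirceAux_of_length_le (i : T) (a : FreeMagma T) {k : ℕ} (hk : a.length ≤ k) :
    (peirceAux R i a).coeff k = 0 := by
  induction a generalizing k with
  | ih1 t =>
    simp only [FreeMagma.length] at hk
    rw [peirceAux_of]
    split_ifs <;> simp [coeff_one, Nat.one_le_iff_ne_zero.mp hk]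
  | ih2 u v ihu ihv =>
    have hu := u.length_pos
    have hv := v.length_pos
    simp only [FreeMagma.length] at hk
    obtain ⟨k, rfl⟩ : ∃ k', k = k' + 1 := ⟨k - 1, by omega⟩
    rw [peirceAux_mul, coeff_X_mul, coeff_add, ihu (by omega), ihv (by omega), add_zero]

theorem eval_one_peirceAux (i : T) (a : FreeMagma T) :
    (peirceAux R i a).eval 1 = countAux i a := by
  induction a with
  | ih1 t => simp only [peirceAux_of, countAux]; split_ifs <;> simp
  | ih2 u v ihu ihv => simp [ihu, ihv]

/-- Kraft's equality for binary trees: the leaves at heights `hⱼ` satisfy `∑ 2^{-hⱼ} = 1`. -/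
theorem sum_eval_half_peirceAux {K : Type*} [Field K] [NeZero (2 : K)] [Fintype T]
    (a : FreeMagma T) : ∑ i, (peirceAux K i a).eval 2⁻¹ = 1 := by
  induction a with
  | ih1 t => simp [apply_ite]
  | ih2 u v ihu ihv =>
    simp only [peirceAux_mul, eval_mul, eval_add, eval_X, Finset.sum_add_distrib,
      ← Finset.mul_sum, ihu, ihv]
    field_simp
    ring

end Words

section Algebra

variable {K : Type*} [Field K] {T : Type*}

theorem aug_mono (w : FreeCommMagma T) : aug K (mono K w) = 1 :=
  Finsupp.lsum_single K (fun _ => LinearMap.id) w 1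

theorem finrank_span_mono (S : Set (FreeCommMagma T)) :
    Module.finrank K (Submodule.span K (mono K '' S)) = Nat.card S := by
  rw [Set.image_eq_range]
  exact Module.finrank_eq_nat_card_basis (.span
    ((MonoidAlgebra.basis (FreeCommMagma T) K).linearIndependent.comp _ Subtype.val_injective))

variable [DecidableEq T]

theorem Dp_mono (i : T) (w : FreeCommMagma T) : Dp K i (mono K w) = w.peirce K i := by
  simp [Dp, mono]

theorem FreeCommMagma.eval_one_peirce (i : T) (w : FreeCommMagma T) :
    (w.peirce K i).eval 1 = w.count i := by
  induction w using Quot.ind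
  exact eval_one_peirceAux K i _

theorem sum_eval_half_Dp [NeZero (2 : K)] [Fintype T] (f : MonoidAlgebra K (FreeCommMagma T)) :
    ∑ i, (Dp K i f).eval 2⁻¹ = aug K f := by
  suffices ∑ i, leval 2⁻¹ ∘ₗ Dp K i = aug K by
    simpa using LinearMap.congr_fun this f
  ext w
  rw [LinearMap.comp_apply, LinearMap.comp_apply, LinearMap.sum_apply]
  change ∑ i, (Dp K i (mono K w)).eval 2⁻¹ = aug K (mono K w)
  simp only [Dp_mono, aug_mono]
  induction w using Quot.ind
  exact sum_eval_half_peirceAux _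

theorem eval_one_Dp_of_mem_span {S : Set (FreeCommMagma T)} {i : T} {c : ℕ}
    (hS : ∀ w ∈ S, w.count i = c) {f : MonoidAlgebra K (FreeCommMagma T)}
    (hf : f ∈ Submodule.span K (mono K '' S)) : (Dp K i f).eval 1 = c * aug K f := by
  refine LinearMap.eqOn_span' (f := leval 1 ∘ₗ Dp K i) (g := (c : K) • aug K) ?_ hf
  rintro _ ⟨w, hw, rfl⟩
  simp [Dp_mono, aug_mono, FreeCommMagma.eval_one_peirce, hS w hw]

theorem coeff_Dp_eq_zero_of_mem_span {S : Set (FreeCommMagma T)} {i : T} {k : ℕ}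
    (hS : ∀ w ∈ S, (w.peirce K i).coeff k = 0) {f : MonoidAlgebra K (FreeCommMagma T)}
    (hf : f ∈ Submodule.span K (mono K '' S)) : (Dp K i f).coeff k = 0 := by
  refine LinearMap.eqOn_span' (f := lcoeff K k ∘ₗ Dp K i) (g := 0) ?_ hf
  rintro _ ⟨w, hw, rfl⟩
  simp [Dp_mono, hS w hw]

end Algebra

section Multidegree311

variable {K : Type*} [Field K] {n : ℕ}

def monomials311 (n : ℕ) : Set (FreeCommMagma (Fin 3)) :=
  {w | w.count 0 = n ∧ w.count 1 = 1 ∧ w.count 2 = 1}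

theorem exists_length_of_mem_monomials311 {w : FreeCommMagma (Fin 3)} (hw : w ∈ monomials311 n) :
    ∃ a : FreeMagma (Fin 3), FreeCommMagma.mk a = w ∧ a.length = n + 2 := by
  obtain ⟨a, rfl⟩ := Quot.exists_rep w
  obtain ⟨h0, h1, h2⟩ : countAux 0 a = n ∧ countAux 1 a = 1 ∧ countAux 2 a = 1 := hw
  refine ⟨a, rfl, ?_⟩
  rw [length_eq_sum_countAux, Fin.sum_univ_three, h0, h1, h2]

theorem coeff_Dp_eq_zero_of_mem_span_monomials311 {f : MonoidAlgebra K (FreeCommMagma (Fin 3))}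
    (hf : f ∈ Submodule.span K (mono K '' monomials311 n)) (i : Fin 3) {k : ℕ}
    (hk : k = 0 ∨ n + 2 ≤ k) : (Dp K i f).coeff k = 0 := by
  refine coeff_Dp_eq_zero_of_mem_span (fun w hw => ?_) hf
  obtain ⟨a, rfl, ha⟩ := exists_length_of_mem_monomials311 hw
  rcases hk with rfl | hk
  · exact coeff_zero_peirceAux_of_one_lt_length K i (by omega)
  · exact coeff_peirceAux_of_length_le K i a (by omega)

theorem Dp_eq_C_mul_X_pow_of_mem_span_monomials311 {f : MonoidAlgebra K (FreeCommMagma (Fin 3))}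
    (hf : f ∈ Submodule.span K (mono K '' monomials311 n)) {i : Fin 3} {c d : ℕ}
    (hc : ∀ w ∈ monomials311 n, w.count i = c)
    (hgap : ∀ k, 0 < k → k < n + 2 → k ≠ d → (Dp K i f).coeff k = 0) :
    Dp K i f = C (c * aug K f) * X ^ d := by
  have hshape := eq_C_mul_X_pow_of_coeff_eq_zero (p := Dp K i f) (d := d) fun k hkd => by
    rcases Nat.eq_zero_or_pos k with rfl | hk
    · exact coeff_Dp_eq_zero_of_mem_span_monomials311 hf i (.inl rfl)
    rcases lt_or_ge k (n + 2) with hkn | hkn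
    · exact hgap k hk hkn hkd
    · exact coeff_Dp_eq_zero_of_mem_span_monomials311 hf i (.inr hkn)
  have hcoeff := eval_one_Dp_of_mem_span hc hf
  rw [hshape, eval_mul, eval_C, eval_pow, eval_X, one_pow, mul_one] at hcoeff
  rw [hshape, hcoeff]

noncomputable def gapCoeffs311 (K : Type*) [Field K] (n : ℕ) :
    MonoidAlgebra K (FreeCommMagma (Fin 3)) →ₗ[K] (Fin n → K) × (Fin n → K) × (Fin n → K) :=
  (coeffWindow K 1 n ∘ₗ Dp K 0).prod
    ((coeffWindow K 2 n ∘ₗ Dp K 1).prod (coeffWindow K 2 n ∘ₗ Dp K 2))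

theorem mem_homEvan311_of_gapCoeffs311_eq_zero [CharZero K] (hn : n ≠ 0)
    {f : MonoidAlgebra K (FreeCommMagma (Fin 3))}
    (hf : f ∈ Submodule.span K (mono K '' monomials311 n)) (hL : gapCoeffs311 K n f = 0) :
    f ∈ homEvan311 K n := by
  obtain ⟨hx, hy, hz⟩ : coeffWindow K 1 n (Dp K 0 f) = 0 ∧ coeffWindow K 2 n (Dp K 1 f) = 0 ∧
      coeffWindow K 2 n (Dp K 2 f) = 0 :=
    ⟨congrArg Prod.fst hL, congrArg (·.2.1) hL, congrArg (·.2.2) hL⟩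
  have hDx : Dp K 0 f = C (n * aug K f) * X ^ (n + 1) :=
    Dp_eq_C_mul_X_pow_of_mem_span_monomials311 (c := n) hf (fun w hw => hw.1)
      fun k hk hkn hkd => coeff_eq_zero_of_coeffWindow_eq_zero hx (by omega) (by omega)
  have hDy : Dp K 1 f = C (aug K f) * X := by
    simpa using Dp_eq_C_mul_X_pow_of_mem_span_monomials311 (c := 1) (d := 1) hf
      (fun w hw => hw.2.1)
      fun k hk hkn hkd => coeff_eq_zero_of_coeffWindow_eq_zero hy (by omega) (by omega)
  have hDz : Dp K 2 f = C (aug K f) * X := by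
    simpa using Dp_eq_C_mul_X_pow_of_mem_span_monomials311 (c := 1) (d := 1) hf
      (fun w hw => hw.2.2)
      fun k hk hkn hkd => coeff_eq_zero_of_coeffWindow_eq_zero hz (by omega) (by omega)
  have haug : aug K f = 0 := by
    have hhalf := sum_eval_half_Dp f
    simp only [Fin.sum_univ_three, hDx, hDy, hDz, eval_mul, eval_C, eval_pow, eval_X] at hhalf
    have : (n : K) * 2⁻¹ ^ (n + 1) * aug K f = 0 := by linear_combination hhalf
    simpa [hn] using this
  exact ⟨⟨⟨⟨hf, haug⟩, by simp [hDx, haug]⟩, by simp [hDy, haug]⟩, by simp [hDz, haug]⟩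

end Multidegree311

end Evanescent

open Evanescent in
/-- Over a field of characteristic zero, for `n ≥ 2` the space of
homogeneous Peirce-evanescent identities of type `[n,1,1]` has dimension at least
`W_{n,1,1} − 3n`. -/
theorem homogeneous_evanescent_multidegree_n_one_one
    {K : Type*} [Field K] [CharZero K] :
    ∀ n : ℕ, 2 ≤ n →
      (Wn11 n : ℤ) - 3 * n ≤ (Module.finrank K (homEvan311 K n) : ℤ) := by
  intro n hn
  have hV : Module.finrank K (Submodule.span K (mono K '' monomials311 n)) = Wn11 n :=
    finrank_span_mono _
  have hbound := finrank_le_finrank_add_finrank_of_inf_ker_le (gapCoeffs311 K n)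
    (V := Submodule.span K (mono K '' monomials311 n)) (E := homEvan311 K n)
    (inf_le_left.trans <| inf_le_left.trans <| inf_le_left.trans inf_le_left)
    fun f hf => mem_homEvan311_of_gapCoeffs311_eq_zero (by omega) hf.1 hf.2
  simp only [hV, Module.finrank_prod, Module.finrank_fin_fun] at hbound
  omega
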